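/- There exists a geometric realization (p, L) of the Gray configuration in the plane together with a point c ∈ ℝ² such that the counterclockwise rotation ρ by 2π/3 about c satisfies ρ(p(v)) = p(v + (2,1,0)) for every v ∈ (ℤ/3ℤ)³, and ρ maps the line L(ℓ) onto the line L(ℓ + (2,1,0)) for every combinatorial line ℓ. (This is the polycyclic realization of the Gray configuration with ℤ₃ rotational symmetry whose reduced Levi graph is the graph GG.) -/

import Mathlib

/- STATEMENT 6: There is a geometric realization (p, L) of the Gray configuration and a
center c such that the rotation ρ by 2π/3 about c satisfies ρ(p(v)) = p(v + (2,1,0)) for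
all points v, and ρ maps the line L(ℓ) onto L(ℓ + (2,1,0)) for every combinatorial line ℓ. -/

open Real

noncomputable section

abbrev Pt := EuclideanSpace ℝ (Fin 2)

def pt (x y : ℝ) : Pt := (WithLp.equiv 2 _).symm ![x, y]

/-- The affine line through two points `A` and `B`. -/
def lineThrough (A B : Pt) : Set Pt := {P | ∃ t : ℝ, P = A + t • (B - A)}

/-- A subset of the plane is an affine line iff it is the line through two distinct points. -/
def IsAffineLine (S : Set Pt) : Prop := ∃ A B : Pt, A ≠ B ∧ S = lineThrough A B

/-- Counterclockwise rotation by angle `θ` about the point `c`. -/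
def rotAbout (θ : ℝ) (c p : Pt) : Pt :=
  pt (c 0 + Real.cos θ * (p 0 - c 0) - Real.sin θ * (p 1 - c 1))
     (c 1 + Real.sin θ * (p 0 - c 0) + Real.cos θ * (p 1 - c 1))

/-- Points of the Gray configuration: elements of (ℤ/3ℤ)³. -/
abbrev GPt := Fin 3 → ZMod 3

/-- The combinatorial line through `v` in coordinate direction `k`. -/
def grayLine (v : GPt) (k : Fin 3) : Set GPt :=
  {w | ∃ t : ZMod 3, w = v + t • (Pi.single k 1 : GPt)}

/-- The combinatorial lines of the Gray configuration. -/
def IsGrayLine (ℓ : Set GPt) : Prop := ∃ v k, ℓ = grayLine v k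

/-- The type of combinatorial lines of the Gray configuration. -/
abbrev GrayLine := {ℓ : Set GPt // IsGrayLine ℓ}

/-!
Identify the plane with ℂ and send `(a, b, c)` to `2ω^b · X_{a+b} · Y_c`, where `ω = e^{2πi/3}` and
`X, Y : ℤ/3 → ℤ[√3][i]` are explicit. Multiplication by `ω` is the rotation by `2π/3` about `0`;
it maps the point of `(a, b, c)` to that of `(a + 2, b + 1, c)` because `a + b` is unchanged.
Injectivity and the incidences (three points collinear exactly along a combinatorial line) are
finite exact computations in `ℤ[√3]`, which embeds in `ℝ`. Each combinatorial line is realized by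
the line through the images of two of its points; the rotation, being affine, maps it to the line
through two points of the translated combinatorial line.
-/

@[simp] theorem pt_apply_zero (x y : ℝ) : pt x y 0 = x := rfl
@[simp] theorem pt_apply_one (x y : ℝ) : pt x y 1 = y := rfl

theorem Pt.ext_iff_coords {P Q : Pt} : P = Q ↔ P 0 = Q 0 ∧ P 1 = Q 1 := by
  refine ⟨fun h => h ▸ ⟨rfl, rfl⟩, fun ⟨h0, h1⟩ => ?_⟩
  ext i
  fin_cases i
  exacts [h0, h1]

theorem add_smul_sub_apply (A B : Pt) (t : ℝ) (i : Fin 2) :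
    (A + t • (B - A)) i = A i + t * (B i - A i) := by
  simp

theorem mem_lineThrough_iff_cross {A B P : Pt} (hAB : A ≠ B) :
    P ∈ lineThrough A B ↔ (P 0 - A 0) * (B 1 - A 1) - (P 1 - A 1) * (B 0 - A 0) = 0 := by
  constructor
  · rintro ⟨t, rfl⟩
    simp only [add_smul_sub_apply]
    ring
  · intro hcross
    have hd : (B 0 - A 0) ^ 2 + (B 1 - A 1) ^ 2 ≠ 0 := by
      intro h
      exact hAB (Pt.ext_iff_coords.2 ⟨by nlinarith, by nlinarith⟩)
    -- the parameter of the orthogonal projection of `P` onto the line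
    refine ⟨((P 0 - A 0) * (B 0 - A 0) + (P 1 - A 1) * (B 1 - A 1)) /
      ((B 0 - A 0) ^ 2 + (B 1 - A 1) ^ 2), Pt.ext_iff_coords.2 ⟨?_, ?_⟩⟩ <;>
      simp only [add_smul_sub_apply] <;> field_simp
    · linear_combination (B 1 - A 1) * hcross
    · linear_combination -(B 0 - A 0) * hcross

theorem lineThrough_eq_of_mem {A B C D : Pt} (hC : C ∈ lineThrough A B)
    (hD : D ∈ lineThrough A B) (hCD : C ≠ D) : lineThrough C D = lineThrough A B := by
  obtain ⟨s, rfl⟩ := hC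
  obtain ⟨u, rfl⟩ := hD
  have hsu : u - s ≠ 0 := fun h => hCD (by rw [sub_eq_zero.mp h])
  ext P
  constructor
  · rintro ⟨t, rfl⟩
    exact ⟨s + t * (u - s), by module⟩
  · rintro ⟨r, rfl⟩
    refine ⟨(r - s) / (u - s), ?_⟩
    match_scalars <;> field_simp <;> ring

theorem rotAbout_add_smul_sub (θ : ℝ) (c A B : Pt) (t : ℝ) :
    rotAbout θ c (A + t • (B - A)) = rotAbout θ c A + t • (rotAbout θ c B - rotAbout θ c A) := by
  refine Pt.ext_iff_coords.2 ⟨?_, ?_⟩ <;>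
    simp only [rotAbout, add_smul_sub_apply, pt_apply_zero, pt_apply_one] <;> ring

theorem image_rotAbout_lineThrough (θ : ℝ) (c A B : Pt) :
    rotAbout θ c '' lineThrough A B = lineThrough (rotAbout θ c A) (rotAbout θ c B) := by
  ext P
  constructor
  · rintro ⟨Q, ⟨t, rfl⟩, rfl⟩
    exact ⟨t, rotAbout_add_smul_sub θ c A B t⟩
  · rintro ⟨t, rfl⟩
    exact ⟨A + t • (B - A), ⟨t, rfl⟩, rotAbout_add_smul_sub θ c A B t⟩

theorem mem_grayLine {w v : GPt} {k : Fin 3} : w ∈ grayLine v k ↔ ∀ j, j = k ∨ w j = v j := by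
  constructor
  · rintro ⟨t, rfl⟩ j
    rcases eq_or_ne j k with hj | hj
    · exact Or.inl hj
    · simp [Pi.single_eq_of_ne hj]
  · intro h
    refine ⟨w k - v k, funext fun j => ?_⟩
    rcases eq_or_ne j k with rfl | hj
    · simp
    · simp [Pi.single_eq_of_ne hj, (h j).resolve_left hj]

theorem self_mem_grayLine (v : GPt) (k : Fin 3) : v ∈ grayLine v k :=
  ⟨0, by simp⟩

theorem add_single_mem_grayLine (v : GPt) (k : Fin 3) : v + Pi.single k 1 ∈ grayLine v k :=
  ⟨1, by simp⟩

theorem add_single_ne_self (v : GPt) (k : Fin 3) : v + Pi.single k 1 ≠ v := by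
  simp

namespace GrayLine

def base (ℓ : GrayLine) : GPt := ℓ.2.choose

def dir (ℓ : GrayLine) : Fin 3 := ℓ.2.choose_spec.choose

theorem eq_grayLine (ℓ : GrayLine) : ℓ.1 = grayLine ℓ.base ℓ.dir :=
  ℓ.2.choose_spec.choose_spec

theorem base_mem (ℓ : GrayLine) : ℓ.base ∈ ℓ.1 :=
  ℓ.eq_grayLine ▸ self_mem_grayLine _ _

theorem base_add_single_mem (ℓ : GrayLine) : ℓ.base + Pi.single ℓ.dir 1 ∈ ℓ.1 :=
  ℓ.eq_grayLine ▸ add_single_mem_grayLine _ _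

end GrayLine

section Realization

variable {p : GPt → Pt}

def RealizesGrayIncidence (p : GPt → Pt) : Prop :=
  ∀ v k w, p w ∈ lineThrough (p v) (p (v + Pi.single k 1)) ↔ w ∈ grayLine v k

def lineOf (p : GPt → Pt) (ℓ : GrayLine) : Set Pt :=
  lineThrough (p ℓ.base) (p (ℓ.base + Pi.single ℓ.dir 1))

theorem mem_lineOf_iff (hinc : RealizesGrayIncidence p)
    (v : GPt) (ℓ : GrayLine) : p v ∈ lineOf p ℓ ↔ v ∈ ℓ.1 := by
  rw [lineOf, hinc, ← ℓ.eq_grayLine]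

theorem lineOf_injective (hinc : RealizesGrayIncidence p) :
    Function.Injective (lineOf p) := fun ℓ ℓ' h =>
  Subtype.ext <| Set.ext fun v => by rw [← mem_lineOf_iff hinc, ← mem_lineOf_iff hinc, h]

theorem isAffineLine_lineOf (hp : Function.Injective p) (ℓ : GrayLine) :
    IsAffineLine (lineOf p ℓ) :=
  ⟨_, _, hp.ne (add_single_ne_self _ _).symm, rfl⟩

theorem image_rotAbout_lineOf (hinc : RealizesGrayIncidence p)
    (hp : Function.Injective p) {θ : ℝ} {c : Pt} {g : GPt}
    (hrot : ∀ v, rotAbout θ c (p v) = p (v + g)) {ℓ ℓ' : GrayLine}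
    (hℓ : ℓ'.1 = (fun u => u + g) '' ℓ.1) :
    rotAbout θ c '' lineOf p ℓ = lineOf p ℓ' := by
  have mem_image {v : GPt} (hv : v ∈ ℓ.1) : p (v + g) ∈ lineOf p ℓ' := by
    rw [mem_lineOf_iff hinc, hℓ]
    exact Set.mem_image_of_mem _ hv
  rw [lineOf, image_rotAbout_lineThrough, hrot, hrot]
  refine lineThrough_eq_of_mem (mem_image ℓ.base_mem) (mem_image ℓ.base_add_single_mem) ?_
  exact hp.ne (by simp)

end Realization

theorem three_ne_mul_self (n : ℤ) : (3 : ℤ) ≠ n * n := by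
  intro h
  rcases le_or_gt n 1 with h1 | h1 <;> rcases le_or_gt n (-2) with h2 | h2 <;> nlinarith

-- `⟨x, y⟩ = x + y i` with `x y ∈ ℤ[√3]` encodes the point `(x, y)` of the plane.
abbrev GaussSqrt3 := QuadraticAlgebra (ℤ√3) (-1) 0

def sqrt3Hom : ℤ√3 →+* ℝ :=
  Zsqrtd.lift ⟨√3, by rw [Real.mul_self_sqrt (by norm_num)]; norm_num⟩

theorem sqrt3Hom_injective : Function.Injective sqrt3Hom :=
  Zsqrtd.lift_injective _ three_ne_mul_self

@[simp] theorem sqrt3Hom_sqrtd : sqrt3Hom Zsqrtd.sqrtd = √3 := by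
  simp [sqrt3Hom]

namespace GaussSqrt3

def toPt (z : GaussSqrt3) : Pt := pt (sqrt3Hom z.re) (sqrt3Hom z.im)

theorem toPt_injective : Function.Injective toPt := fun z w h => by
  obtain ⟨hre, him⟩ := Pt.ext_iff_coords.1 h
  exact QuadraticAlgebra.ext (sqrt3Hom_injective hre) (sqrt3Hom_injective him)

def cross (w u v : GaussSqrt3) : ℤ√3 :=
  (w.re - u.re) * (v.im - u.im) - (w.im - u.im) * (v.re - u.re)

theorem toPt_mem_lineThrough_iff {u v w : GaussSqrt3} (huv : u ≠ v) :
    toPt w ∈ lineThrough (toPt u) (toPt v) ↔ cross w u v = 0 := by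
  rw [mem_lineThrough_iff_cross (toPt_injective.ne huv), ← map_eq_zero_iff _ sqrt3Hom_injective]
  simp [toPt, cross]

-- `2ω` for `ω = e^{2πi/3}`: multiplying by it rotates by `2π/3` about `0` and scales by `2`.
def twiceOmega : GaussSqrt3 := ⟨-1, Zsqrtd.sqrtd⟩

theorem rotAbout_toPt {z w : GaussSqrt3} (h : twiceOmega * z = 2 * w) :
    rotAbout (2 * π / 3) 0 (toPt z) = toPt w := by
  have hcos : cos (2 * π / 3) = -(1 / 2) := by
    rw [show 2 * π / 3 = π - π / 3 by ring, cos_pi_sub, cos_pi_div_three]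
  have hsin : sin (2 * π / 3) = √3 / 2 := by
    rw [show 2 * π / 3 = π - π / 3 by ring, sin_pi_sub, sin_pi_div_three]
  have hre := congrArg (fun z => sqrt3Hom z.re) h
  have him := congrArg (fun z => sqrt3Hom z.im) h
  simp [twiceOmega, QuadraticAlgebra.re_ofNat, QuadraticAlgebra.im_ofNat, map_ofNat] at hre him
  refine Pt.ext_iff_coords.2 ⟨?_, ?_⟩ <;> simp [rotAbout, toPt, hcos, hsin] <;> linarith

def twiceCubeRoot (t : ZMod 3) : GaussSqrt3 :=
  if t = 0 then 2 else if t = 1 then twiceOmega else ⟨-1, -Zsqrtd.sqrtd⟩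

theorem twiceOmega_mul_twiceCubeRoot (t : ZMod 3) :
    twiceOmega * twiceCubeRoot t = 2 * twiceCubeRoot (t + 1) := by
  revert t; decide

end GaussSqrt3

open GaussSqrt3

def grayX (t : ZMod 3) : GaussSqrt3 :=
  if t = 0 then ⟨258, 224⟩ else if t = 1 then ⟨⟨66, 8⟩, ⟨-112, 14⟩⟩ else ⟨⟨66, -8⟩, ⟨-112, -14⟩⟩

def grayY (t : ZMod 3) : GaussSqrt3 :=
  if t = 0 then ⟨36, 8⟩ else if t = 1 then ⟨⟨12, 4⟩, ⟨-4, 2⟩⟩ else ⟨⟨12, -4⟩, ⟨-4, -2⟩⟩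

def grayPoint (v : GPt) : GaussSqrt3 := twiceCubeRoot (v 1) * grayX (v 0 + v 1) * grayY (v 2)

theorem twiceOmega_mul_grayPoint (v : GPt) :
    twiceOmega * grayPoint v = 2 * grayPoint (v + ![2, 1, 0]) := by
  have h3 : (3 : ZMod 3) = 0 := rfl
  have hsum : v 0 + 2 + (v 1 + 1) = v 0 + v 1 := by linear_combination h3
  simp only [grayPoint, Pi.add_apply, Matrix.cons_val_zero, Matrix.cons_val_one,
    Matrix.cons_val_two, Matrix.head_cons, Matrix.tail_cons, add_zero, hsum, ← mul_assoc,
    twiceOmega_mul_twiceCubeRoot]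

set_option maxRecDepth 100000 in
theorem grayPoint_injective : Function.Injective grayPoint := by
  unfold Function.Injective; decide

set_option maxRecDepth 100000 in
theorem cross_grayPoint_eq_zero_iff (v : GPt) (k : Fin 3) (w : GPt) :
    cross (grayPoint w) (grayPoint v) (grayPoint (v + Pi.single k 1)) = 0 ↔
      ∀ j, j = k ∨ w j = v j := by
  revert v k w; decide

theorem realizesGrayIncidence_toPt_comp_grayPoint :
    RealizesGrayIncidence (toPt ∘ grayPoint) :=
  fun v k w => by
    simp only [Function.comp_apply]
    rw [toPt_mem_lineThrough_iff (grayPoint_injective.ne (add_single_ne_self v k).symm),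
      cross_grayPoint_eq_zero_iff, mem_grayLine]

theorem gray_polycyclic_realization_GG_RLG :
    ∃ (p : GPt → Pt) (L : GrayLine → Set Pt) (c : Pt),
      Function.Injective p ∧ Function.Injective L ∧
      (∀ ℓ : GrayLine, IsAffineLine (L ℓ)) ∧
      (∀ (v : GPt) (ℓ : GrayLine), p v ∈ L ℓ ↔ v ∈ ℓ.1) ∧
      (∀ v : GPt, rotAbout (2 * π / 3) c (p v) = p (v + ![2, 1, 0])) ∧
      (∀ ℓ ℓ' : GrayLine, ℓ'.1 = (fun u => u + ![2, 1, 0]) '' ℓ.1 →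
        rotAbout (2 * π / 3) c '' L ℓ = L ℓ') := by
  have hinj : Function.Injective (toPt ∘ grayPoint) := toPt_injective.comp grayPoint_injective
  have hinc := realizesGrayIncidence_toPt_comp_grayPoint
  have hrot (v : GPt) : rotAbout (2 * π / 3) 0 ((toPt ∘ grayPoint) v) =
      (toPt ∘ grayPoint) (v + ![2, 1, 0]) :=
    rotAbout_toPt (twiceOmega_mul_grayPoint v)
  exact ⟨toPt ∘ grayPoint, lineOf (toPt ∘ grayPoint), 0, hinj, lineOf_injective hinc,
    isAffineLine_lineOf hinj, mem_lineOf_iff hinc, hrot,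
    fun _ _ => image_rotAbout_lineOf hinc hinj hrot⟩
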